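/- arXiv:1904.07004 — 3 statements merged into one kernel-verified Lean document; each statement's English description precedes it below -/
import Mathlib

section
/- Let F ⊣ U ⊣ G be adjunctions with N a model category, and suppose UF ⊣ UG is a Quillen adjunction on N. Then every morphism f in M having the left lifting property against all morphisms h with U h a fibration satisfies: U f has the left lifting property against all fibrations in N. -/
open CategoryTheory Limits

structure ModelStructure (E : Type*) [CategoryTheory.Category E] where
  weq : CategoryTheory.MorphismProperty E
  cof : CategoryTheory.MorphismProperty E
  fib : CategoryTheory.MorphismProperty E
  weq_iso : ∀ {X Y : E} (e : X ≅ Y), weq e.hom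
  weq_comp : ∀ {X Y Z : E} (f : X ⟶ Y) (g : Y ⟶ Z), weq f → weq g → weq (f ≫ g)
  weq_of_comp_left : ∀ {X Y Z : E} (f : X ⟶ Y) (g : Y ⟶ Z), weq g → weq (f ≫ g) → weq f
  weq_of_comp_right : ∀ {X Y Z : E} (f : X ⟶ Y) (g : Y ⟶ Z), weq f → weq (f ≫ g) → weq g
  cof_iff : ∀ {A B : E} (i : A ⟶ B), cof i ↔
    ∀ {X Y : E} (p : X ⟶ Y), fib p → weq p → CategoryTheory.HasLiftingProperty i p
  fib_iff : ∀ {X Y : E} (p : X ⟶ Y), fib p ↔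
    ∀ {A B : E} (i : A ⟶ B), cof i → weq i → CategoryTheory.HasLiftingProperty i p
  fact_left : ∀ {X Y : E} (f : X ⟶ Y),
    ∃ (Z : E) (i : X ⟶ Z) (p : Z ⟶ Y), cof i ∧ weq i ∧ fib p ∧ i ≫ p = f
  fact_right : ∀ {X Y : E} (f : X ⟶ Y),
    ∃ (Z : E) (i : X ⟶ Z) (p : Z ⟶ Y), cof i ∧ fib p ∧ weq p ∧ i ≫ p = f

theorem stmt2_general {M N : Type*} [Category M] [Category N] (S : ModelStructure N)
    (U : M ⥤ N) (G : N ⥤ M)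
    (adj₂ : U ⊣ G)
    (hUG_fib : ∀ {X Y : N} (p : X ⟶ Y), S.fib p → S.fib ((G ⋙ U).map p))
    {A B : M} (f : A ⟶ B)
    (hf : ∀ {X Y : M} (h : X ⟶ Y), S.fib (U.map h) → HasLiftingProperty f h) :
    ∀ {X Y : N} (p : X ⟶ Y), S.fib p → HasLiftingProperty (U.map f) p := by
  intro X Y p hp
  exact (adj₂.hasLiftingProperty_iff f p).mpr (hf (G.map p) (hUG_fib p hp))

/-- If `F ⊣ U ⊣ G` with `N` a model category and `UF ⊣ UG` a Quillen adjunction, then any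
morphism `f` of `M` with the left lifting property against all morphisms `h` with `U h` a
fibration has the property that `U f` has the left lifting property against all
fibrations of `N`. -/
theorem stmt2 {M N : Type*} [Category M] [Category N] (S : ModelStructure N)
    (F : N ⥤ M) (U : M ⥤ N) (G : N ⥤ M)
    (adj₁ : F ⊣ U) (adj₂ : U ⊣ G)
    (hUG_fib : ∀ {X Y : N} (p : X ⟶ Y), S.fib p → S.fib ((G ⋙ U).map p))
    (hUG_acycfib : ∀ {X Y : N} (p : X ⟶ Y), S.fib p → S.weq p →
      S.fib ((G ⋙ U).map p) ∧ S.weq ((G ⋙ U).map p))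
    {A B : M} (f : A ⟶ B)
    (hf : ∀ {X Y : M} (h : X ⟶ Y), S.fib (U.map h) → HasLiftingProperty f h) :
    ∀ {X Y : N} (p : X ⟶ Y), S.fib p → HasLiftingProperty (U.map f) p :=
  stmt2_general S U G adj₂ hUG_fib f hf
end

section
/- Let F ⊣ U ⊣ G be adjunctions with N a model category such that UF ⊣ UG is Quillen. Then every morphism in M with left lifting against all U-acyclic U-fibrations (projective cofibration) has the property that its U-image is a cofibration in N. -/
open CategoryTheory Limits

theorem stmt3_general {M N : Type*} [Category M] [Category N] (S : ModelStructure N)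
    (U : M ⥤ N) (G : N ⥤ M)
    (adj₂ : U ⊣ G)
    (hUG_acycfib : ∀ {X Y : N} (p : X ⟶ Y), S.fib p → S.weq p →
      S.fib ((G ⋙ U).map p) ∧ S.weq ((G ⋙ U).map p))
    {A B : M} (f : A ⟶ B)
    (hf : ∀ {X Y : M} (h : X ⟶ Y), S.fib (U.map h) → S.weq (U.map h) →
      HasLiftingProperty f h) :
    ∀ {X Y : N} (p : X ⟶ Y), S.fib p → S.weq p → HasLiftingProperty (U.map f) p := by
  intro X Y p hp hw
  obtain ⟨hGp_fib, hGp_weq⟩ := hUG_acycfib p hp hw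
  exact (adj₂.hasLiftingProperty_iff f p).2 (hf (G.map p) hGp_fib hGp_weq)

/-- If `F ⊣ U ⊣ G` with `N` a model category and `UF ⊣ UG` a Quillen adjunction, then any
projective cofibration (morphism with left lifting against all `U`-acyclic
`U`-fibrations) has the property that its `U`-image is a cofibration in `N`, i.e. has the
left lifting property against every acyclic fibration of `N`. -/
theorem stmt3 {M N : Type*} [Category M] [Category N] (S : ModelStructure N)
    (F : N ⥤ M) (U : M ⥤ N) (G : N ⥤ M)
    (adj₁ : F ⊣ U) (adj₂ : U ⊣ G)
    (hUG_fib : ∀ {X Y : N} (p : X ⟶ Y), S.fib p → S.fib ((G ⋙ U).map p))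
    (hUG_acycfib : ∀ {X Y : N} (p : X ⟶ Y), S.fib p → S.weq p →
      S.fib ((G ⋙ U).map p) ∧ S.weq ((G ⋙ U).map p))
    {A B : M} (f : A ⟶ B)
    (hf : ∀ {X Y : M} (h : X ⟶ Y), S.fib (U.map h) → S.weq (U.map h) →
      HasLiftingProperty f h) :
    ∀ {X Y : N} (p : X ⟶ Y), S.fib p → S.weq p → HasLiftingProperty (U.map f) p :=
  stmt3_general S U G adj₂ hUG_acycfib f hf
end

section
/- Let P(n+1) denote the poset of proper subsets of the (n+1)-element set {0,1,…,n}, and let A be the category (a ← b → c). The functor q : P(n+1) → A sending {1,…,n} to a, every proper subset of {1,…,n} to b, and every subset containing 0 to c, is a well-defined functor and is a Grothendieck opfibration; moreover the induced functor q⁻¹(b) → q⁻¹(c) given by adjoining the element 0 is an isomorphism of categories, and both fibers q⁻¹(b) and q⁻¹(c) are isomorphic to P(n). -/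
/-!
Everything in sight is thin, so functoriality, the cocartesian property and isomorphisms of
categories all reduce to statements about inclusions of subsets. The cocartesian lift of `b → a`
out of `S` is `{1,…,n}` and that of `b → c` is `S ∪ {0}`: each is the least subset containing `S`
that lies over the target. Adjoining `0` is inverted by removing it, and the fiber over `b` is the
image of the proper subsets of `Fin n` under `i ↦ i + 1`.
-/

open CategoryTheory Limits

/-- The poset of proper subsets of an `m`-element set, as a category. -/
abbrev ProperSubsets (m : ℕ) := {S : Finset (Fin m) // S ≠ Finset.univ}

/-- A functor `q : E ⥤ A` is a Grothendieck opfibration: every morphism of `A` out of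
the image of an object `X` admits a cocartesian lift out of `X`. -/
def IsOpfibration {E A : Type*} [Category E] [Category A] (q : E ⥤ A) : Prop :=
  ∀ (X : E) (Y : A) (f : q.obj X ⟶ Y),
    ∃ (X' : E) (φ : X ⟶ X') (h : q.obj X' = Y),
      q.map φ ≫ eqToHom h = f ∧
      ∀ (Z : E) (ψ : X ⟶ Z) (g : q.obj X' ⟶ q.obj Z),
        q.map φ ≫ g = q.map ψ → ∃! χ : X' ⟶ Z, q.map χ = g ∧ φ ≫ χ = ψ

/-- The prescribed object assignment: `{1,…,n}` goes to `a` (= left), proper subsets of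
`{1,…,n}` go to `b` (= zero), and subsets containing `0` go to `c` (= right). -/
noncomputable def qObj (n : ℕ) (S : ProperSubsets (n + 1)) : WalkingSpan :=
  if S.1 = Finset.univ.erase 0 then WalkingSpan.left
  else if (0 : Fin (n + 1)) ∈ S.1 then WalkingSpan.right
  else WalkingSpan.zero

universe u v

open Finset

namespace Finset

variable {α : Type*} [Fintype α] {a : α} {s : Finset α}

lemma ne_univ_of_notMem (h : a ∉ s) : s ≠ univ :=
  fun hs => h (hs ▸ mem_univ a)

variable [DecidableEq α]

lemma insert_eq_univ_iff (ha : a ∉ s) : insert a s = univ ↔ s = univ.erase a := by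
  rw [eq_comm, ← erase_eq_iff_eq_insert (mem_univ a) ha, eq_comm]

lemma eq_univ_erase_of_univ_erase_subset (h : univ.erase a ⊆ s) (hs : s ≠ univ) :
    s = univ.erase a := by
  grind

end Finset

lemma Fin.zero_notMem_map_succEmb {n : ℕ} (s : Finset (Fin n)) : 0 ∉ s.map (Fin.succEmb n) := by
  simp [Fin.succ_ne_zero]

lemma Fin.univ_map_succEmb (n : ℕ) : univ.map (Fin.succEmb n) = univ.erase 0 := by
  ext i
  cases i using Fin.cases <;> simp [Fin.succ_ne_zero]

namespace CategoryTheory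

lemma nonempty_hom_iff_le {α : Type*} [Preorder α] {X Y : α} : Nonempty (X ⟶ Y) ↔ X ≤ Y :=
  ⟨fun ⟨f⟩ => leOfHom f, fun h => ⟨homOfLE h⟩⟩

noncomputable def Functor.ofNonemptyHom {C D : Type*} [Category C] [Category D]
    [Quiver.IsThin D] (F : C → D) (hF : ∀ {X Y : C}, (X ⟶ Y) → Nonempty (F X ⟶ F Y)) :
    C ⥤ D where
  obj := F
  map f := (hF f).some
  map_id _ := Subsingleton.elim _ _
  map_comp _ _ := Subsingleton.elim _ _

noncomputable def Cat.isoOfThinEquiv {C D : Type u} [Category.{v} C] [Category.{v} D]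
    [Quiver.IsThin C] [Quiver.IsThin D] (e : C ≃ D)
    (he : ∀ X Y, Nonempty (e X ⟶ e Y) ↔ Nonempty (X ⟶ Y)) : Cat.of C ≅ Cat.of D where
  hom := (Functor.ofNonemptyHom e fun f => (he _ _).2 ⟨f⟩).toCatHom
  inv := (Functor.ofNonemptyHom e.symm fun {X Y} f =>
    (he _ _).1 (by simpa only [e.apply_symm_apply] using (⟨f⟩ : Nonempty (X ⟶ Y)))).toCatHom
  hom_inv_id := Cat.Hom.ext <| show _ ⋙ _ = 𝟭 C from
    Functor.ext e.symm_apply_apply fun _ _ _ => Subsingleton.elim _ _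
  inv_hom_id := Cat.Hom.ext <| show _ ⋙ _ = 𝟭 D from
    Functor.ext e.apply_symm_apply fun _ _ _ => Subsingleton.elim _ _

namespace Functor.Fiber

variable {𝒮 𝒳 : Type*} [Category 𝒮] [Category 𝒳] {p : 𝒳 ⥤ 𝒮} {S : 𝒮}

instance [Quiver.IsThin 𝒳] : Quiver.IsThin (p.Fiber S) :=
  fun _ _ => ⟨fun _ _ => hom_ext (Subsingleton.elim _ _)⟩

lemma nonempty_hom_iff [Quiver.IsThin 𝒮] {a b : p.Fiber S} :
    Nonempty (a ⟶ b) ↔ Nonempty (a.1 ⟶ b.1) :=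
  ⟨fun ⟨φ⟩ => ⟨φ.1⟩, fun ⟨φ⟩ => ⟨⟨φ, IsHomLift.of_fac _ _ _ a.2 b.2 (Subsingleton.elim _ _)⟩⟩⟩

end Functor.Fiber

lemma Limits.WalkingSpan.nonempty_hom_iff {X Y : WalkingSpan} :
    Nonempty (X ⟶ Y) ↔ X = zero ∨ X = Y := by
  constructor
  · rintro ⟨f⟩
    cases (show WidePushoutShape.Hom X Y from f) with
    | id => exact .inr rfl
    | init => exact .inl rfl
  · rintro (rfl | rfl)
    · cases Y with
      | none => exact ⟨𝟙 _⟩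
      | some j => exact ⟨WidePushoutShape.Hom.init j⟩
    · exact ⟨𝟙 _⟩

end CategoryTheory

theorem isOpfibration_of_exists_least_lift {E A : Type*} [Preorder E] [Category A]
    [Quiver.IsThin A] (q : E ⥤ A)
    (h : ∀ (X : E) (Y : A), Nonempty (q.obj X ⟶ Y) →
      ∃ X', X ≤ X' ∧ q.obj X' = Y ∧ ∀ Z, X ≤ Z → Nonempty (Y ⟶ q.obj Z) → X' ≤ Z) :
    IsOpfibration q := by
  intro X Y f
  obtain ⟨X', hXX', rfl, hleast⟩ := h X Y ⟨f⟩
  refine ⟨X', homOfLE hXX', rfl, Subsingleton.elim _ _, fun Z ψ g _ => ?_⟩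
  exact ⟨homOfLE (hleast Z (leOfHom ψ) ⟨g⟩), ⟨Subsingleton.elim _ _, Subsingleton.elim _ _⟩,
    fun _ _ => Subsingleton.elim _ _⟩

section qObj

variable {n : ℕ} {S : ProperSubsets (n + 1)}

lemma qObj_eq_left_iff : qObj n S = .left ↔ S.1 = univ.erase 0 := by
  unfold qObj; split_ifs <;> simp_all; nofun

lemma qObj_eq_right_iff : qObj n S = .right ↔ 0 ∈ S.1 := by
  unfold qObj; split_ifs <;> simp_all; nofun

lemma qObj_eq_zero_iff : qObj n S = .zero ↔ 0 ∉ S.1 ∧ S.1 ≠ univ.erase 0 := by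
  unfold qObj; split_ifs <;> simp_all

lemma qObj_eq_zero_or_eq_of_le {T : ProperSubsets (n + 1)} (h : S ≤ T) :
    qObj n S = .zero ∨ qObj n S = qObj n T := by
  have hST : S.1 ⊆ T.1 := h
  by_cases hS : S.1 = univ.erase 0
  · have hT : T.1 = univ.erase 0 := eq_univ_erase_of_univ_erase_subset (hS ▸ hST) T.2
    exact .inr (by rw [qObj_eq_left_iff.2 hS, qObj_eq_left_iff.2 hT])
  · by_cases h0 : 0 ∈ S.1
    · exact .inr (by rw [qObj_eq_right_iff.2 h0, qObj_eq_right_iff.2 (hST h0)])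
    · exact .inl (qObj_eq_zero_iff.2 ⟨h0, hS⟩)

end qObj

noncomputable def qFunctor (n : ℕ) : ProperSubsets (n + 1) ⥤ WalkingSpan :=
  Functor.ofNonemptyHom (qObj n) fun f =>
    WalkingSpan.nonempty_hom_iff.2 (qObj_eq_zero_or_eq_of_le (leOfHom f))

theorem qFunctor_isOpfibration (n : ℕ) : IsOpfibration (qFunctor n) := by
  refine isOpfibration_of_exists_least_lift _ fun X Y hXY => ?_
  by_cases hY : qObj n X = Y
  · exact ⟨X, le_rfl, hY, fun _ hXZ _ => hXZ⟩
  obtain ⟨h0, hX⟩ := qObj_eq_zero_iff.1 <|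
    (WalkingSpan.nonempty_hom_iff.1 hXY).resolve_right hY
  have over_of_nonempty_hom (W : WalkingSpan) (hW : W ≠ .zero) {Z : ProperSubsets (n + 1)} :
      Nonempty (W ⟶ qObj n Z) → qObj n Z = W := fun h =>
    ((WalkingSpan.nonempty_hom_iff.1 h).resolve_left hW).symm
  rcases Y with _ | ⟨_ | _⟩
  · exact absurd (qObj_eq_zero_iff.2 ⟨h0, hX⟩) hY
  · refine ⟨⟨univ.erase 0, ne_univ_of_notMem (notMem_erase 0 _)⟩,
      subset_erase.2 ⟨subset_univ _, h0⟩, qObj_eq_left_iff.2 rfl, fun Z _ hZ => ?_⟩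
    exact (qObj_eq_left_iff.1 (over_of_nonempty_hom .left nofun hZ)).ge
  · refine ⟨⟨insert 0 X.1, (insert_eq_univ_iff h0).not.2 hX⟩, subset_insert _ _,
      qObj_eq_right_iff.2 (mem_insert_self _ _), fun Z hXZ hZ => ?_⟩
    exact insert_subset (qObj_eq_right_iff.1 (over_of_nonempty_hom .right nofun hZ)) hXZ

lemma qFunctor_fiber_nonempty_hom_iff {n : ℕ} {W : WalkingSpan} {X Y : (qFunctor n).Fiber W} :
    Nonempty (X ⟶ Y) ↔ X.1.1 ⊆ Y.1.1 :=
  Functor.Fiber.nonempty_hom_iff.trans nonempty_hom_iff_le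

noncomputable def insertZeroEquiv (n : ℕ) :
    (qFunctor n).Fiber .zero ≃ (qFunctor n).Fiber .right where
  toFun X := ⟨⟨insert 0 X.1.1, (insert_eq_univ_iff (qObj_eq_zero_iff.1 X.2).1).not.2
    (qObj_eq_zero_iff.1 X.2).2⟩, qObj_eq_right_iff.2 (mem_insert_self _ _)⟩
  invFun Y := ⟨⟨Y.1.1.erase 0, ne_univ_of_notMem (notMem_erase 0 _)⟩,
    qObj_eq_zero_iff.2 ⟨notMem_erase _ _, fun h => Y.1.2 <| by
      rwa [← insert_erase (qObj_eq_right_iff.1 Y.2), insert_eq_univ_iff (notMem_erase _ _)]⟩⟩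
  left_inv X := Subtype.ext <| Subtype.ext <| erase_insert (qObj_eq_zero_iff.1 X.2).1
  right_inv Y := Subtype.ext <| Subtype.ext <| insert_erase (qObj_eq_right_iff.1 Y.2)

noncomputable def mapSuccEquiv (n : ℕ) : ProperSubsets n ≃ (qFunctor n).Fiber .zero := by
  refine Equiv.ofBijective (fun T => ⟨⟨T.1.map (Fin.succEmb n),
    ne_univ_of_notMem (Fin.zero_notMem_map_succEmb _)⟩, qObj_eq_zero_iff.2
      ⟨Fin.zero_notMem_map_succEmb _, by rw [← Fin.univ_map_succEmb, Ne, map_inj]; exact T.2⟩⟩)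
    ⟨fun T T' h => Subtype.ext (map_injective _ (congrArg (·.1.1) h)), fun X => ?_⟩
  obtain ⟨h0, hX⟩ := qObj_eq_zero_iff.1 X.2
  obtain ⟨u, -, hu⟩ := subset_map_iff.1 <| show X.1.1 ⊆ univ.map (Fin.succEmb n) by
    rw [Fin.univ_map_succEmb]; exact subset_erase.2 ⟨subset_univ _, h0⟩
  exact ⟨⟨u, fun h => hX (by rw [hu, h, Fin.univ_map_succEmb])⟩, Subtype.ext (Subtype.ext hu.symm)⟩

noncomputable def fiberZeroIsoFiberRight (n : ℕ) :
    Cat.of ((qFunctor n).Fiber .zero) ≅ Cat.of ((qFunctor n).Fiber .right) :=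
  Cat.isoOfThinEquiv (insertZeroEquiv n) fun X _ =>
    qFunctor_fiber_nonempty_hom_iff.trans <| (insert_subset_insert_iff
      (qObj_eq_zero_iff.1 X.2).1).trans qFunctor_fiber_nonempty_hom_iff.symm

noncomputable def fiberZeroIsoProperSubsets (n : ℕ) :
    Cat.of ((qFunctor n).Fiber .zero) ≅ Cat.of (ProperSubsets n) :=
  (Cat.isoOfThinEquiv (mapSuccEquiv n) fun _ _ =>
    qFunctor_fiber_nonempty_hom_iff.trans <| map_subset_map.trans nonempty_hom_iff_le.symm).symm

/-- The assignment `qObj` extends to a functor `q` from the poset of proper subsets of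
the `(n+1)`-element set to the walking span `(a ← b → c)`; this functor is a
Grothendieck opfibration; the induced functor from the fiber over `b` to the fiber over
`c` given by adjoining the element `0` is an isomorphism of categories; and both of
these fibers are isomorphic to the poset of proper subsets of an `n`-element set. -/
theorem stmt12 (n : ℕ) :
    ∃ q : ProperSubsets (n + 1) ⥤ WalkingSpan,
      (∀ S, q.obj S = qObj n S) ∧
      IsOpfibration q ∧
      (∃ e : Cat.of (q.Fiber WalkingSpan.zero) ≅ Cat.of (q.Fiber WalkingSpan.right),
        ∀ X : q.Fiber WalkingSpan.zero, (e.hom.toFunctor.obj X).1.1 = insert 0 X.1.1) ∧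
      Nonempty (Cat.of (q.Fiber WalkingSpan.zero) ≅ Cat.of (ProperSubsets n)) ∧
      Nonempty (Cat.of (q.Fiber WalkingSpan.right) ≅ Cat.of (ProperSubsets n)) :=
  ⟨qFunctor n, fun _ => rfl, qFunctor_isOpfibration n,
    ⟨fiberZeroIsoFiberRight n, fun _ => rfl⟩, ⟨fiberZeroIsoProperSubsets n⟩,
    ⟨(fiberZeroIsoFiberRight n).symm ≪≫ fiberZeroIsoProperSubsets n⟩⟩
end
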